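/- Let E, F be Banach lattices with F Dedekind complete, and let P be a linear subspace of L(E,F) closed in the operator norm and satisfying the domination property. Then r-P(E,F) is a Dedekind complete Banach lattice under the enveloping norm, and moreover ‖T‖_{r-P} = ‖ |T| ‖ for every T ∈ r-P(E,F). -/

import Mathlib

open Filter Topology

variable {E F : Type*}
  [NormedAddCommGroup E] [Lattice E] [HasSolidNorm E] [IsOrderedAddMonoid E] [NormedSpace ℝ E] [CompleteSpace E]
  [NormedAddCommGroup F] [Lattice F] [HasSolidNorm F] [IsOrderedAddMonoid F] [NormedSpace ℝ F] [CompleteSpace F]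

/-- A continuous operator is positive if it maps the positive cone into the positive cone. -/
def IsPosOp (T : E →L[ℝ] F) : Prop := ∀ x : E, 0 ≤ x → 0 ≤ T x

/-- The operator order: `S ≤ T` iff `T - S` is positive. -/
def OpLE (S T : E →L[ℝ] F) : Prop := IsPosOp (T - S)

/-- `T` is a regularly `P`-operator: `T = T₁ - T₂` with `T₁, T₂ ∈ P` positive. -/
def IsRegPOp (P : Set (E →L[ℝ] F)) (T : E →L[ℝ] F) : Prop :=
  ∃ T₁ T₂ : E →L[ℝ] F, T₁ ∈ P ∧ T₂ ∈ P ∧ IsPosOp T₁ ∧ IsPosOp T₂ ∧ T = T₁ - T₂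

/-- The enveloping norm of `T` relative to `P`. -/
noncomputable def envNorm (P : Set (E →L[ℝ] F)) (T : E →L[ℝ] F) : ℝ :=
  sInf {c : ℝ | ∃ S ∈ P, OpLE (-S) T ∧ OpLE T S ∧ c = ‖S‖}

/-- `M` is the modulus of `T`: the least upper bound of `T` and `-T` in the
operator order. -/
def IsModulusOp (T M : E →L[ℝ] F) : Prop :=
  OpLE T M ∧ OpLE (-T) M ∧ ∀ U : E →L[ℝ] F, OpLE T U → OpLE (-T) U → OpLE M U

-- basic lemmas
lemma opLE_iff {S T : E →L[ℝ] F} : OpLE S T ↔ ∀ x, 0 ≤ x → S x ≤ T x := by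
  unfold OpLE IsPosOp
  simp [sub_nonneg]

lemma opLE_of_pt {S T : E →L[ℝ] F} (h : ∀ x, 0 ≤ x → S x ≤ T x) : OpLE S T := opLE_iff.2 h

lemma aux_abs_apply_le {T S : E →L[ℝ] F} (h1 : OpLE (-S) T) (h2 : OpLE T S) (x : E) :
    |T x| ≤ S |x| := by
  rw [opLE_iff] at h1 h2
  have key : ∀ y : E, 0 ≤ y → |T y| ≤ S y := by
    intro y hy
    refine abs_le'.2 ⟨h2 y hy, ?_⟩
    have := h1 y hy
    simp only [ContinuousLinearMap.neg_apply] at this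
    rwa [neg_le] at this
  calc |T x| = |T x⁺ - T x⁻| := by rw [← map_sub, posPart_sub_negPart]
    _ ≤ |T x⁺| + |T x⁻| := by
        simpa [abs_neg, sub_eq_add_neg] using (abs_add_le (T x⁺) (-(T x⁻)))
    _ ≤ S x⁺ + S x⁻ := add_le_add (key _ (posPart_nonneg x)) (key _ (negPart_nonneg x))
    _ = S |x| := by rw [← map_add, posPart_add_negPart]

lemma aux_opNorm_le {T S : E →L[ℝ] F} (h1 : OpLE (-S) T) (h2 : OpLE T S) : ‖T‖ ≤ ‖S‖ := by
  refine ContinuousLinearMap.opNorm_le_bound _ (norm_nonneg S) fun x => ?_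
  have h := aux_abs_apply_le h1 h2 x
  have hS : 0 ≤ S |x| := le_trans (abs_nonneg _) h
  calc ‖T x‖ = ‖|T x|‖ := (norm_abs_eq_norm _).symm
    _ ≤ ‖S |x|‖ := norm_le_norm_of_abs_le_abs (by rwa [abs_abs, abs_of_nonneg hS])
    _ ≤ ‖S‖ * ‖|x|‖ := S.le_opNorm _
    _ = ‖S‖ * ‖x‖ := by rw [norm_abs_eq_norm]

lemma aux_pos_opLE_neg {S T : E →L[ℝ] F} (hT : IsPosOp T) (h : OpLE T S) : OpLE (-S) T := by
  rw [opLE_iff] at h ⊢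
  intro x hx
  have h1 := hT x hx
  have h2 := h x hx
  simp only [ContinuousLinearMap.neg_apply]
  exact le_trans (neg_nonpos.2 (h1.trans h2)) h1

lemma aux_norm_mono {T S : E →L[ℝ] F} (hT : IsPosOp T) (h : OpLE T S) : ‖T‖ ≤ ‖S‖ :=
  aux_opNorm_le (aux_pos_opLE_neg hT h) h

lemma aux_dom_pos {S T : E →L[ℝ] F} (h1 : OpLE (-S) T) (h2 : OpLE T S) : IsPosOp S := by
  rw [opLE_iff] at h1 h2
  intro x hx
  have ha := h1 x hx
  have hb := h2 x hx
  simp only [ContinuousLinearMap.neg_apply] at ha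
  rw [neg_le] at ha
  calc (0:F) ≤ |T x| := abs_nonneg _
    _ ≤ S x := abs_le'.2 ⟨hb, ha⟩

lemma aux_regular_mem {P : Submodule ℝ (E →L[ℝ] F)} {T : E →L[ℝ] F}
    (h : IsRegPOp (P : Set (E →L[ℝ] F)) T) : T ∈ P := by
  obtain ⟨T₁, T₂, h1, h2, _, _, rfl⟩ := h
  exact sub_mem h1 h2

lemma aux_dominated_regular {P : Submodule ℝ (E →L[ℝ] F)}
    (hdom : ∀ S T : E →L[ℝ] F, IsPosOp S → OpLE S T → T ∈ P → S ∈ P)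
    {D S : E →L[ℝ] F} (hS : S ∈ P) (h1 : OpLE (-S) D) (h2 : OpLE D S) :
    IsRegPOp (P : Set (E →L[ℝ] F)) D := by
  have hSpos : IsPosOp S := aux_dom_pos h1 h2
  have hDSpos : IsPosOp (D + S) := by
    intro x hx
    have := opLE_iff.1 h1 x hx
    simp only [ContinuousLinearMap.neg_apply] at this
    simp only [ContinuousLinearMap.add_apply]
    have h := add_le_add_left this (S x)
    simpa using h
  have hmem : D + S ∈ P := by
    refine hdom (D + S) (S + S) hDSpos (opLE_of_pt fun x hx => ?_) (add_mem hS hS)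
    have := opLE_iff.1 h2 x hx
    simp only [ContinuousLinearMap.add_apply]
    exact add_le_add_left this (S x)
  exact ⟨D + S, S, hmem, hS, hDSpos, hSpos, by abel⟩

lemma aux_regular_neg {P : Set (E →L[ℝ] F)} {T : E →L[ℝ] F} (h : IsRegPOp P T) :
    IsRegPOp P (-T) := by
  obtain ⟨T₁, T₂, h1, h2, p1, p2, rfl⟩ := h
  exact ⟨T₂, T₁, h2, h1, p2, p1, by abel⟩

lemma aux_regular_add {P : Submodule ℝ (E →L[ℝ] F)} {S T : E →L[ℝ] F}
    (hS : IsRegPOp (P : Set (E →L[ℝ] F)) S) (hT : IsRegPOp (P : Set (E →L[ℝ] F)) T) :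
    IsRegPOp (P : Set (E →L[ℝ] F)) (S + T) := by
  obtain ⟨S₁, S₂, m1, m2, p1, p2, rfl⟩ := hS
  obtain ⟨T₁, T₂, n1, n2, q1, q2, rfl⟩ := hT
  exact ⟨S₁ + T₁, S₂ + T₂, add_mem m1 n1, add_mem m2 n2,
    fun x hx => add_nonneg (p1 x hx) (q1 x hx),
    fun x hx => add_nonneg (p2 x hx) (q2 x hx), by abel⟩

lemma aux_regular_sub {P : Submodule ℝ (E →L[ℝ] F)} {S T : E →L[ℝ] F}
    (hS : IsRegPOp (P : Set (E →L[ℝ] F)) S) (hT : IsRegPOp (P : Set (E →L[ℝ] F)) T) :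
    IsRegPOp (P : Set (E →L[ℝ] F)) (S - T) := by
  rw [sub_eq_add_neg]
  exact aux_regular_add hS (aux_regular_neg hT)

-- the defining set of envNorm
lemma aux_env_bddBelow (P : Set (E →L[ℝ] F)) (T : E →L[ℝ] F) :
    BddBelow {c : ℝ | ∃ S ∈ P, OpLE (-S) T ∧ OpLE T S ∧ c = ‖S‖} := by
  refine ⟨0, fun c hc => ?_⟩
  obtain ⟨S, _, _, _, rfl⟩ := hc
  exact norm_nonneg S

lemma aux_env_nonempty {P : Submodule ℝ (E →L[ℝ] F)} {T : E →L[ℝ] F}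
    (h : IsRegPOp (P : Set (E →L[ℝ] F)) T) :
    {c : ℝ | ∃ S ∈ (P : Set (E →L[ℝ] F)), OpLE (-S) T ∧ OpLE T S ∧ c = ‖S‖}.Nonempty := by
  obtain ⟨T₁, T₂, h1, h2, p1, p2, rfl⟩ := h
  refine ⟨‖T₁ + T₂‖, T₁ + T₂, add_mem h1 h2, opLE_of_pt fun x hx => ?_,
    opLE_of_pt fun x hx => ?_, rfl⟩
  · have hp1 := p1 x hx
    simp only [ContinuousLinearMap.neg_apply, ContinuousLinearMap.add_apply,
      ContinuousLinearMap.sub_apply, neg_add, sub_eq_add_neg]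
    exact add_le_add_left (neg_le_self hp1) _
  · have hp2 := p2 x hx
    simp only [ContinuousLinearMap.add_apply, ContinuousLinearMap.sub_apply,
      sub_eq_add_neg]
    exact add_le_add_right (neg_le_self hp2) _

lemma aux_envNorm_le {P : Submodule ℝ (E →L[ℝ] F)} {T S : E →L[ℝ] F} (hS : S ∈ P)
    (h1 : OpLE (-S) T) (h2 : OpLE T S) : envNorm (P : Set (E →L[ℝ] F)) T ≤ ‖S‖ :=
  csInf_le (aux_env_bddBelow _ _) ⟨S, hS, h1, h2, rfl⟩

lemma aux_envNorm_nonneg (P : Set (E →L[ℝ] F)) (T : E →L[ℝ] F) : 0 ≤ envNorm P T :=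
  Real.sInf_nonneg fun c hc => by obtain ⟨S, _, _, _, rfl⟩ := hc; exact norm_nonneg S

lemma aux_norm_le_envNorm {P : Submodule ℝ (E →L[ℝ] F)} {T : E →L[ℝ] F}
    (h : IsRegPOp (P : Set (E →L[ℝ] F)) T) : ‖T‖ ≤ envNorm (P : Set (E →L[ℝ] F)) T := by
  refine le_csInf (aux_env_nonempty h) fun c hc => ?_
  obtain ⟨S, _, h1, h2, rfl⟩ := hc
  exact aux_opNorm_le h1 h2

lemma aux_le_envNorm {P : Submodule ℝ (E →L[ℝ] F)} {T : E →L[ℝ] F} {a : ℝ}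
    (hreg : IsRegPOp (P : Set (E →L[ℝ] F)) T)
    (h : ∀ S, S ∈ P → OpLE (-S) T → OpLE T S → a ≤ ‖S‖) :
    a ≤ envNorm (P : Set (E →L[ℝ] F)) T := by
  refine le_csInf (aux_env_nonempty hreg) fun c hc => ?_
  obtain ⟨S, hS, h1, h2, rfl⟩ := hc
  exact h S hS h1 h2

lemma aux_envNorm_add_le {P : Submodule ℝ (E →L[ℝ] F)} {A B : E →L[ℝ] F}
    (hA : IsRegPOp (P : Set (E →L[ℝ] F)) A) (hB : IsRegPOp (P : Set (E →L[ℝ] F)) B) :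
    envNorm (P : Set (E →L[ℝ] F)) (A + B)
      ≤ envNorm (P : Set (E →L[ℝ] F)) A + envNorm (P : Set (E →L[ℝ] F)) B := by
  have key : ∀ SA ∈ P, OpLE (-SA) A → OpLE A SA → ∀ SB ∈ P, OpLE (-SB) B → OpLE B SB →
      envNorm (P : Set (E →L[ℝ] F)) (A + B) ≤ ‖SA‖ + ‖SB‖ := by
    intro SA hSA ha1 ha2 SB hSB hb1 hb2
    have h1 : OpLE (-(SA + SB)) (A + B) := by
      rw [opLE_iff] at ha1 hb1 ⊢
      intro x hx
      have u := ha1 x hx; have v := hb1 x hx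
      simp only [ContinuousLinearMap.neg_apply, ContinuousLinearMap.add_apply] at u v ⊢
      rw [neg_add]
      exact add_le_add u v
    have h2 : OpLE (A + B) (SA + SB) := by
      rw [opLE_iff] at ha2 hb2 ⊢
      intro x hx
      have u := ha2 x hx; have v := hb2 x hx
      simp only [ContinuousLinearMap.add_apply] at u v ⊢
      exact add_le_add u v
    calc envNorm (P : Set (E →L[ℝ] F)) (A + B) ≤ ‖SA + SB‖ :=
          aux_envNorm_le (add_mem hSA hSB) h1 h2
      _ ≤ ‖SA‖ + ‖SB‖ := norm_add_le _ _
  have h1 : envNorm (P : Set (E →L[ℝ] F)) (A + B) - envNorm (P : Set (E →L[ℝ] F)) B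
      ≤ envNorm (P : Set (E →L[ℝ] F)) A := by
    refine aux_le_envNorm hA fun SA hSA ha1 ha2 => ?_
    have h2 : envNorm (P : Set (E →L[ℝ] F)) (A + B) - ‖SA‖
        ≤ envNorm (P : Set (E →L[ℝ] F)) B := by
      refine aux_le_envNorm hB fun SB hSB hb1 hb2 => ?_
      have := key SA hSA ha1 ha2 SB hSB hb1 hb2
      linarith
    linarith
  linarith

lemma aux_modulus_nonneg {T M : E →L[ℝ] F} (hM : IsModulusOp T M) : IsPosOp M := by
  obtain ⟨h1, h2, _⟩ := hM
  rw [opLE_iff] at h1 h2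
  intro x hx
  have u := h1 x hx
  have v := h2 x hx
  simp only [ContinuousLinearMap.neg_apply] at v
  calc (0:F) ≤ |T x| := abs_nonneg _
    _ ≤ M x := abs_le'.2 ⟨u, v⟩

lemma aux_modulus_dominates {T M : E →L[ℝ] F} (hM : IsModulusOp T M) :
    OpLE (-M) T ∧ OpLE T M := by
  obtain ⟨h1, h2, _⟩ := hM
  constructor
  · rw [opLE_iff] at h2 ⊢
    intro x hx
    have := h2 x hx
    simp only [ContinuousLinearMap.neg_apply] at this ⊢
    rwa [neg_le]
  · exact h1

lemma aux_envNorm_eq_modulus {P : Submodule ℝ (E →L[ℝ] F)}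
    (hdom : ∀ S T : E →L[ℝ] F, IsPosOp S → OpLE S T → T ∈ P → S ∈ P)
    {T M : E →L[ℝ] F} (hT : IsRegPOp (P : Set (E →L[ℝ] F)) T) (hM : IsModulusOp T M) :
    envNorm (P : Set (E →L[ℝ] F)) T = ‖M‖ := by
  obtain ⟨hTM, hnTM, hleast⟩ := hM
  have hMpos : IsPosOp M := aux_modulus_nonneg ⟨hTM, hnTM, hleast⟩
  -- M is dominated by any dominator S of T, hence M ∈ P by domination
  have hMleS : ∀ S : E →L[ℝ] F, OpLE (-S) T → OpLE T S → OpLE M S := by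
    intro S h1 h2
    refine hleast S h2 ?_
    rw [opLE_iff] at h1 ⊢
    intro x hx
    have := h1 x hx
    simp only [ContinuousLinearMap.neg_apply] at this ⊢
    rwa [neg_le] at this
  have hMmem : M ∈ P := by
    obtain ⟨c, hc⟩ := aux_env_nonempty hT
    obtain ⟨S, hS, h1, h2, rfl⟩ := hc
    exact hdom M S hMpos (hMleS S h1 h2) hS
  have hd := aux_modulus_dominates ⟨hTM, hnTM, hleast⟩
  refine le_antisymm (aux_envNorm_le hMmem hd.1 hd.2) ?_
  refine aux_le_envNorm hT fun S hS h1 h2 => ?_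
  exact aux_norm_mono hMpos (hMleS S h1 h2)

lemma aux_complete {P : Submodule ℝ (E →L[ℝ] F)} (hP : IsClosed (P : Set (E →L[ℝ] F)))
    (hdom : ∀ S T : E →L[ℝ] F, IsPosOp S → OpLE S T → T ∈ P → S ∈ P)
    (T : ℕ → E →L[ℝ] F) (hreg : ∀ n, IsRegPOp (P : Set (E →L[ℝ] F)) (T n))
    (hC : ∀ ε : ℝ, 0 < ε → ∃ N : ℕ, ∀ m ≥ N, ∀ n ≥ N,
      envNorm (P : Set (E →L[ℝ] F)) (T m - T n) < ε) :
    ∃ L : E →L[ℝ] F, IsRegPOp (P : Set (E →L[ℝ] F)) L ∧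
      Tendsto (fun n => envNorm (P : Set (E →L[ℝ] F)) (T n - L)) atTop (𝓝 0) := by
  have hregsub : ∀ m n, IsRegPOp (P : Set (E →L[ℝ] F)) (T m - T n) :=
    fun m n => aux_regular_sub (hreg m) (hreg n)
  -- choose a fast Cauchy subsequence
  have hNex : ∀ k : ℕ, ∃ N : ℕ, ∀ m ≥ N, ∀ n ≥ N,
      envNorm (P : Set (E →L[ℝ] F)) (T m - T n) < (1/2 : ℝ)^k :=
    fun k => hC _ (by positivity)
  choose N hN using hNex
  let φ : ℕ → ℕ := fun k => Nat.rec (N 0) (fun k ih => max (ih + 1) (N (k + 1))) k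
  have hφsucc : ∀ k, φ (k + 1) = max (φ k + 1) (N (k + 1)) := fun k => rfl
  have hφmono : StrictMono φ := strictMono_nat_of_lt_succ fun k => by
    rw [hφsucc]; exact lt_of_lt_of_le (Nat.lt_succ_self _) (le_max_left _ _)
  have hφN : ∀ k, N k ≤ φ k := by
    intro k
    cases k with
    | zero => exact le_rfl
    | succ k => rw [hφsucc]; exact le_max_right _ _
  -- choose dominating operators for consecutive differences
  have hSex : ∀ k : ℕ, ∃ S : E →L[ℝ] F, S ∈ P ∧
      OpLE (-S) (T (φ (k+1)) - T (φ k)) ∧ OpLE (T (φ (k+1)) - T (φ k)) S ∧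
      ‖S‖ < (1/2 : ℝ)^k := by
    intro k
    have henv : envNorm (P : Set (E →L[ℝ] F)) (T (φ (k+1)) - T (φ k)) < (1/2 : ℝ)^k := by
      refine hN k _ ?_ _ (hφN k)
      exact le_trans (hφN k) (hφmono.monotone (Nat.le_succ k))
    obtain ⟨c, hc, hlt⟩ := exists_lt_of_csInf_lt (aux_env_nonempty (hregsub _ _)) henv
    obtain ⟨S, hS, h1, h2, rfl⟩ := hc
    exact ⟨S, hS, h1, h2, hlt⟩
  choose S hSmem hS1 hS2 hSn using hSex
  have hSpos : ∀ k, IsPosOp (S k) := fun k => aux_dom_pos (hS1 k) (hS2 k)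
  -- the tail sums R k
  have hsummNorm : ∀ k, Summable fun j => ‖S (k + j)‖ := by
    intro k
    refine Summable.of_nonneg_of_le (fun j => norm_nonneg _)
      (fun j => (hSn (k + j)).le) ?_
    simpa [pow_add] using (summable_geometric_of_lt_one (by norm_num : (0:ℝ) ≤ 1/2)
      (by norm_num : (1/2 : ℝ) < 1)).mul_left ((1/2 : ℝ)^k)
  have hsumm : ∀ k, Summable fun j => S (k + j) := fun k => (hsummNorm k).of_norm
  set R : ℕ → E →L[ℝ] F := fun k => ∑' j, S (k + j) with hR
  have hRsum : ∀ k, HasSum (fun j => S (k + j)) (R k) := fun k => (hsumm k).hasSum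
  have hRx : ∀ k x, HasSum (fun j => S (k + j) x) (R k x) := by
    intro k x
    exact (ContinuousLinearMap.apply ℝ F x).hasSum (hRsum k)
  have hRmem : ∀ k, R k ∈ P := by
    intro k
    refine hP.mem_of_tendsto ((hRsum k).tendsto_sum_nat) ?_
    exact Filter.Eventually.of_forall fun n => Submodule.sum_mem P fun j _ => hSmem (k + j)
  have hRpos : ∀ k, IsPosOp (R k) := by
    intro k x hx
    rw [← (hRx k x).tsum_eq]
    exact tsum_nonneg fun j => hSpos (k + j) x hx
  have hRnorm : ∀ k, ‖R k‖ ≤ 2 * (1/2 : ℝ)^k := by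
    intro k
    calc ‖R k‖ ≤ ∑' j, ‖S (k + j)‖ := norm_tsum_le_tsum_norm (hsummNorm k)
      _ ≤ ∑' j : ℕ, (1/2 : ℝ)^(k + j) := by
          refine Summable.tsum_le_tsum (fun j => (hSn (k + j)).le) (hsummNorm k) ?_
          simpa [pow_add] using (summable_geometric_of_lt_one (by norm_num : (0:ℝ) ≤ 1/2)
            (by norm_num : (1/2 : ℝ) < 1)).mul_left ((1/2 : ℝ)^k)
      _ = (1/2 : ℝ)^k * 2 := by
          simp only [pow_add]
          rw [tsum_mul_left, tsum_geometric_of_lt_one (by norm_num) (by norm_num)]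
          norm_num
      _ = 2 * (1/2 : ℝ)^k := by ring
  -- the limit L (in operator norm)
  have hcauchy : CauchySeq T := by
    rw [Metric.cauchySeq_iff]
    intro ε hε
    obtain ⟨Nε, hNε⟩ := hC ε hε
    refine ⟨Nε, fun m hm n hn => ?_⟩
    rw [dist_eq_norm]
    exact lt_of_le_of_lt (aux_norm_le_envNorm (hregsub m n)) (hNε m hm n hn)
  obtain ⟨L, hL⟩ := cauchySeq_tendsto_of_complete hcauchy
  -- partial sum bounds
  have hkey : ∀ k, OpLE (-(R k)) (T (φ k) - L) ∧ OpLE (T (φ k) - L) (R k) := by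
    intro k
    have hbounds : ∀ x : E, 0 ≤ x → ∀ m, k ≤ m →
        T (φ m) x - T (φ k) x ≤ (∑ j ∈ Finset.range (m - k), S (k + j)) x ∧
        -((∑ j ∈ Finset.range (m - k), S (k + j)) x) ≤ T (φ m) x - T (φ k) x := by
      intro x hx m hm
      induction m, hm using Nat.le_induction with
      | base => simp
      | succ m hm ih =>
        have hs : (m + 1) - k = (m - k) + 1 := by omega
        have heq : (∑ j ∈ Finset.range ((m+1) - k), S (k + j)) x
            = (∑ j ∈ Finset.range (m - k), S (k + j)) x + S m x := by
          rw [hs, Finset.sum_range_succ, Nat.add_sub_cancel' hm]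
          simp [ContinuousLinearMap.add_apply]
        have hu := opLE_iff.1 (hS2 m) x hx
        have hl := opLE_iff.1 (hS1 m) x hx
        simp only [ContinuousLinearMap.sub_apply] at hu
        simp only [ContinuousLinearMap.neg_apply, ContinuousLinearMap.sub_apply] at hl
        constructor
        · rw [heq]
          calc T (φ (m+1)) x - T (φ k) x
              = (T (φ m) x - T (φ k) x) + (T (φ (m+1)) x - T (φ m) x) := by abel
            _ ≤ (∑ j ∈ Finset.range (m - k), S (k + j)) x + S m x := add_le_add ih.1 hu
        · rw [heq, neg_add]
          calc -(∑ j ∈ Finset.range (m - k), S (k + j)) x + -(S m x)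
              ≤ (T (φ m) x - T (φ k) x) + (T (φ (m+1)) x - T (φ m) x) := by
                refine add_le_add ih.2 ?_
                exact hl
            _ = T (φ (m+1)) x - T (φ k) x := by abel
    have hpartial : ∀ x : E, 0 ≤ x → ∀ n : ℕ,
        (∑ j ∈ Finset.range n, S (k + j)) x ≤ R k x := by
      intro x hx n
      rw [← (hRx k x).tsum_eq]
      have : (∑ j ∈ Finset.range n, S (k + j)) x = ∑ j ∈ Finset.range n, S (k + j) x := by
        simp [ContinuousLinearMap.sum_apply]
      rw [this]
      exact Summable.sum_le_tsum (Finset.range n) (fun j _ => hSpos (k + j) x hx)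
        ((ContinuousLinearMap.apply ℝ F x).summable (hsumm k))
    have htx : ∀ x : E, Tendsto (fun m => T (φ m) x) atTop (𝓝 (L x)) := by
      intro x
      exact ((ContinuousLinearMap.apply ℝ F x).continuous.tendsto L).comp
        (hL.comp (hφmono.tendsto_atTop))
    constructor
    · rw [opLE_iff]
      intro x hx
      simp only [ContinuousLinearMap.neg_apply, ContinuousLinearMap.sub_apply]
      have hlim : Tendsto (fun m => T (φ m) x - T (φ k) x) atTop (𝓝 (L x - T (φ k) x)) :=
        (htx x).sub_const _
      have hle : L x - T (φ k) x ≤ R k x := by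
        refine le_of_tendsto hlim (Filter.eventually_atTop.2 ⟨k, fun m hm => ?_⟩)
        exact le_trans ((hbounds x hx m hm).1) (hpartial x hx _)
      rw [neg_le]
      have : -(T (φ k) x - L x) = L x - T (φ k) x := by abel
      rw [this]
      exact hle
    · rw [opLE_iff]
      intro x hx
      simp only [ContinuousLinearMap.sub_apply]
      have hlim : Tendsto (fun m => T (φ m) x - T (φ k) x) atTop (𝓝 (L x - T (φ k) x)) :=
        (htx x).sub_const _
      have hge : -(R k x) ≤ L x - T (φ k) x := by
        refine ge_of_tendsto hlim (Filter.eventually_atTop.2 ⟨k, fun m hm => ?_⟩)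
        refine le_trans ?_ ((hbounds x hx m hm).2)
        exact neg_le_neg (hpartial x hx _)
      have h1 : -(L x - T (φ k) x) ≤ R k x := neg_le.mp hge
      rwa [neg_sub] at h1
  have hLreg : IsRegPOp (P : Set (E →L[ℝ] F)) L := by
    have hD : IsRegPOp (P : Set (E →L[ℝ] F)) (T (φ 0) - L) :=
      aux_dominated_regular hdom (hRmem 0) (hkey 0).1 (hkey 0).2
    have : L = T (φ 0) - (T (φ 0) - L) := by abel
    rw [this]
    exact aux_regular_sub (hreg _) hD
  refine ⟨L, hLreg, ?_⟩
  rw [Metric.tendsto_atTop]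
  intro ε hε
  obtain ⟨N₁, hN₁⟩ := hC (ε/2) (by linarith)
  obtain ⟨k₀, hk₀⟩ := exists_pow_lt_of_lt_one (show (0:ℝ) < ε/4 by linarith)
    (by norm_num : (1/2 : ℝ) < 1)
  set k := max k₀ N₁ with hk
  have hφk : N₁ ≤ φ k := le_trans (le_max_right _ _) (hφmono.le_apply)
  have henvk : envNorm (P : Set (E →L[ℝ] F)) (T (φ k) - L) ≤ 2 * (1/2:ℝ)^k :=
    le_trans (aux_envNorm_le (hRmem k) (hkey k).1 (hkey k).2) (hRnorm k)
  have hpowk : (1/2:ℝ)^k ≤ (1/2:ℝ)^k₀ :=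
    pow_le_pow_of_le_one (by norm_num) (by norm_num) (le_max_left _ _)
  refine ⟨N₁, fun n hn => ?_⟩
  have hregTL : IsRegPOp (P : Set (E →L[ℝ] F)) (T n - L) := aux_regular_sub (hreg n) hLreg
  have hsplit : T n - L = (T n - T (φ k)) + (T (φ k) - L) := by abel
  have htri : envNorm (P : Set (E →L[ℝ] F)) (T n - L)
      ≤ envNorm (P : Set (E →L[ℝ] F)) (T n - T (φ k))
        + envNorm (P : Set (E →L[ℝ] F)) (T (φ k) - L) := by
    rw [hsplit]
    exact aux_envNorm_add_le (hregsub n (φ k)) (aux_regular_sub (hreg _) hLreg)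
  have h1 : envNorm (P : Set (E →L[ℝ] F)) (T n - T (φ k)) < ε/2 := hN₁ n hn _ hφk
  have h2 : envNorm (P : Set (E →L[ℝ] F)) (T (φ k) - L) < ε/2 := by
    have : 2 * (1/2:ℝ)^k < ε/2 := by
      have := hpowk.trans_lt hk₀
      linarith
    linarith
  rw [Real.dist_eq, sub_zero, abs_of_nonneg (aux_envNorm_nonneg _ _)]
  linarith

lemma aux_riesz {n : ℕ} (z : Fin n → E) (hz : ∀ i, 0 ≤ z i) :
    ∀ x y : E, 0 ≤ x → 0 ≤ y → (∑ i, z i) = x + y →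
    ∃ u v : Fin n → E, (∀ i, 0 ≤ u i) ∧ (∀ i, 0 ≤ v i) ∧ (∀ i, z i = u i + v i) ∧
      (∑ i, u i) = x ∧ (∑ i, v i) = y := by
  induction n with
  | zero =>
    intro x y hx hy hsum
    simp only [Finset.univ_eq_empty, Finset.sum_empty] at hsum
    have hxy : x ≤ 0 := by
      calc x ≤ x + y := le_add_of_nonneg_right hy
        _ = 0 := hsum.symm
    have hx0 : x = 0 := le_antisymm hxy hx
    have hy0 : y = 0 := by
      have : y ≤ 0 := by
        calc y ≤ x + y := le_add_of_nonneg_left hx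
          _ = 0 := hsum.symm
      exact le_antisymm this hy
    exact ⟨Fin.elim0, Fin.elim0, fun i => i.elim0, fun i => i.elim0, fun i => i.elim0,
      by simp [hx0], by simp [hy0]⟩
  | succ n ih =>
    intro x y hx hy hsum
    set zl := z (Fin.last n) with hzl_def
    have hzl : 0 ≤ zl := hz _
    have hzl_le : zl ≤ x + y := by
      rw [← hsum]
      exact Finset.single_le_sum (fun i _ => hz i) (Finset.mem_univ _)
    set a := zl ⊓ x with ha_def
    set b := zl - a with hb_def
    have ha0 : 0 ≤ a := le_inf hzl hx
    have hax : a ≤ x := inf_le_right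
    have hb0 : 0 ≤ b := sub_nonneg.2 inf_le_left
    have hab : a + b = zl := by rw [hb_def]; abel
    have hby : b ≤ y := by
      rw [hb_def, sub_le_iff_le_add]
      rw [ha_def, add_inf]
      exact le_inf (le_add_of_nonneg_left hy) (by rwa [add_comm x y] at hzl_le)
    have hsum' : (∑ i : Fin n, z i.castSucc) = (x - a) + (y - b) := by
      have h1 : (∑ i : Fin n, z i.castSucc) + zl = x + y := by
        rw [← hsum, Fin.sum_univ_castSucc]
      have h2 : (x - a) + (y - b) = x + y - (a + b) := by abel
      rw [h2, hab, ← h1]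
      abel
    obtain ⟨u', v', hu0, hv0, huv, hus, hvs⟩ :=
      ih (fun i => z i.castSucc) (fun i => hz _) (x - a) (y - b)
        (sub_nonneg.2 hax) (sub_nonneg.2 hby) hsum'
    refine ⟨Fin.snoc u' a, Fin.snoc v' b, ?_, ?_, ?_, ?_, ?_⟩
    · intro i
      refine Fin.lastCases ?_ ?_ i
      · simpa using ha0
      · intro j; simpa using hu0 j
    · intro i
      refine Fin.lastCases ?_ ?_ i
      · simpa using hb0
      · intro j; simpa using hv0 j
    · intro i
      refine Fin.lastCases ?_ ?_ i
      · simpa using hab.symm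
      · intro j; simpa using huv j
    · rw [Fin.sum_univ_castSucc]
      simp only [Fin.snoc_castSucc, Fin.snoc_last]
      rw [hus]; abel
    · rw [Fin.sum_univ_castSucc]
      simp only [Fin.snoc_castSucc, Fin.snoc_last]
      rw [hvs]; abel

lemma aux_sup {P : Submodule ℝ (E →L[ℝ] F)}
    (hdom : ∀ S T : E →L[ℝ] F, IsPosOp S → OpLE S T → T ∈ P → S ∈ P)
    (hF : ∀ A : Set F, A.Nonempty → BddAbove A → ∃ s, IsLUB A s)
    (A : Set (E →L[ℝ] F)) (hA : ∀ S ∈ A, IsRegPOp (P : Set (E →L[ℝ] F)) S)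
    (hne : A.Nonempty)
    (U : E →L[ℝ] F) (hU : IsRegPOp (P : Set (E →L[ℝ] F)) U) (hub : ∀ S ∈ A, OpLE S U) :
    ∃ M, IsRegPOp (P : Set (E →L[ℝ] F)) M ∧ (∀ S ∈ A, OpLE S M) ∧
      ∀ V, IsRegPOp (P : Set (E →L[ℝ] F)) V → (∀ S ∈ A, OpLE S V) → OpLE M V := by
  obtain ⟨S0, hS0⟩ := hne
  set D : E → Set F := fun x => {w | ∃ (n : ℕ) (Sf : Fin n → E →L[ℝ] F) (zf : Fin n → E),
    (∀ i, Sf i ∈ A) ∧ (∀ i, 0 ≤ zf i) ∧ (∑ i, zf i) = x ∧ w = ∑ i, Sf i (zf i)} with hD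
  have hmemD : ∀ S ∈ A, ∀ x : E, 0 ≤ x → S x ∈ D x := by
    intro S hS x hx
    exact ⟨1, fun _ => S, fun _ => x, fun _ => hS, fun _ => hx, by simp, by simp⟩
  have hubD : ∀ V : E →L[ℝ] F, (∀ S ∈ A, OpLE S V) → ∀ x : E, 0 ≤ x →
      ∀ w ∈ D x, w ≤ V x := by
    intro V hV x hx w hw
    obtain ⟨n, Sf, zf, hSf, hzf, hzsum, rfl⟩ := hw
    calc (∑ i, Sf i (zf i)) ≤ ∑ i, V (zf i) :=
          Finset.sum_le_sum fun i _ => opLE_iff.1 (hV _ (hSf i)) _ (hzf i)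
      _ = V x := by rw [← map_sum, hzsum]
  have hlubex : ∀ x : E, 0 ≤ x → ∃ s, IsLUB (D x) s := fun x hx =>
    hF _ ⟨S0 x, hmemD S0 hS0 x hx⟩ ⟨U x, fun w hw => hubD U hub x hx w hw⟩
  choose! m hm using hlubex
  have hconcat : ∀ x y : E, 0 ≤ x → 0 ≤ y → ∀ w1 ∈ D x, ∀ w2 ∈ D y,
      w1 + w2 ∈ D (x + y) := by
    rintro x y hx hy w1 ⟨n1, S1, z1, hS1, hz1, hsum1, rfl⟩ w2 ⟨n2, S2, z2, hS2, hz2, hsum2, rfl⟩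
    refine ⟨n1 + n2, Fin.append S1 S2, Fin.append z1 z2, ?_, ?_, ?_, ?_⟩
    · intro i
      refine Fin.addCases ?_ ?_ i
      · intro j; simp [hS1 j]
      · intro j; simp [hS2 j]
    · intro i
      refine Fin.addCases ?_ ?_ i
      · intro j; simp [hz1 j]
      · intro j; simp [hz2 j]
    · rw [Fin.sum_univ_add]
      simp [hsum1, hsum2]
    · rw [Fin.sum_univ_add]
      simp [Fin.append_left, Fin.append_right]
  have hadd : ∀ x y : E, 0 ≤ x → 0 ≤ y → m (x + y) = m x + m y := by
    intro x y hx hy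
    have hxy : 0 ≤ x + y := add_nonneg hx hy
    refine (hm _ hxy).unique ?_
    constructor
    · rintro w ⟨n, Sf, zf, hSf, hzf, hzsum, rfl⟩
      obtain ⟨u, v, hu0, hv0, huv, hus, hvs⟩ := aux_riesz zf hzf x y hx hy hzsum
      have h1 : (∑ i, Sf i (u i)) ∈ D x := ⟨n, Sf, u, hSf, hu0, hus, rfl⟩
      have h2 : (∑ i, Sf i (v i)) ∈ D y := ⟨n, Sf, v, hSf, hv0, hvs, rfl⟩
      have heq : (∑ i, Sf i (zf i)) = (∑ i, Sf i (u i)) + (∑ i, Sf i (v i)) := by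
        rw [← Finset.sum_add_distrib]
        exact Finset.sum_congr rfl fun i _ => by rw [huv i, map_add]
      rw [heq]
      exact add_le_add ((hm x hx).1 h1) ((hm y hy).1 h2)
    · intro c hc
      have key : ∀ w1 ∈ D x, ∀ w2 ∈ D y, w1 + w2 ≤ c := fun w1 h1 w2 h2 =>
        hc (hconcat x y hx hy w1 h1 w2 h2)
      have h1 : m x ≤ c - m y := by
        refine (hm x hx).2 fun w1 hw1 => ?_
        rw [le_sub_iff_add_le]
        have h2 : m y ≤ c - w1 := by
          refine (hm y hy).2 fun w2 hw2 => ?_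
          rw [le_sub_iff_add_le, add_comm]
          exact key w1 hw1 w2 hw2
        calc w1 + m y ≤ w1 + (c - w1) := add_le_add_right h2 w1
          _ = c := by abel
      calc m x + m y ≤ (c - m y) + m y := add_le_add_left h1 _
        _ = c := by abel
  have hm0 : m 0 = 0 := by
    have h := hadd 0 0 le_rfl le_rfl
    rw [add_zero] at h
    exact add_eq_left.mp h.symm
  have hkey : ∀ a b x : E, 0 ≤ a → 0 ≤ b → a - b = x → m a - m b = m x⁺ - m x⁻ := by
    intro a b x ha hb heq
    have hx : x⁺ - x⁻ = a - b := by rw [posPart_sub_negPart, heq]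
    have h2 : x⁺ + b = a + x⁻ := sub_eq_sub_iff_add_eq_add.1 hx
    have h3 : m (x⁺ + b) = m (a + x⁻) := by rw [h2]
    rw [hadd _ _ (posPart_nonneg x) hb, hadd _ _ ha (negPart_nonneg x)] at h3
    exact sub_eq_sub_iff_add_eq_add.2 h3.symm
  set f : E → F := fun x => m x⁺ - m x⁻ with hf
  have hfadd : ∀ x y : E, f (x + y) = f x + f y := by
    intro x y
    have h1 : (x⁺ + y⁺) - (x⁻ + y⁻) = x + y := by
      have hx := posPart_sub_negPart x
      have hy := posPart_sub_negPart y
      conv_rhs => rw [← hx, ← hy]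
      abel
    have h2 := hkey (x⁺ + y⁺) (x⁻ + y⁻) (x + y)
      (add_nonneg (posPart_nonneg x) (posPart_nonneg y))
      (add_nonneg (negPart_nonneg x) (negPart_nonneg y)) h1
    rw [hadd _ _ (posPart_nonneg x) (posPart_nonneg y),
      hadd _ _ (negPart_nonneg x) (negPart_nonneg y)] at h2
    have : f (x + y) = (m x⁺ + m y⁺) - (m x⁻ + m y⁻) := h2.symm
    rw [this, hf]
    beta_reduce
    abel
  have hfx : ∀ x : E, 0 ≤ x → f x = m x := by
    intro x hx
    have := hkey x 0 x hx le_rfl (sub_zero x)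
    rw [hm0, sub_zero] at this
    exact this.symm
  have hlb : ∀ x : E, 0 ≤ x → S0 x ≤ m x := fun x hx => (hm x hx).1 (hmemD S0 hS0 x hx)
  have hubm : ∀ x : E, 0 ≤ x → m x ≤ U x := fun x hx =>
    (hm x hx).2 fun w hw => hubD U hub x hx w hw
  set C : ℝ := ‖S0‖ + ‖U‖ with hC
  have hmn : ∀ y : E, 0 ≤ y → ‖m y‖ ≤ C * ‖y‖ := by
    intro y hy
    have habs : |m y| ≤ |S0 y| + |U y| := by
      refine abs_le'.2 ⟨?_, ?_⟩
      · exact le_trans (hubm y hy) (le_trans (le_abs_self _) (le_add_of_nonneg_left (abs_nonneg _)))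
      · exact le_trans (neg_le_neg (hlb y hy))
          (le_trans (neg_le_abs _) (le_add_of_nonneg_right (abs_nonneg _)))
    calc ‖m y‖ ≤ ‖|S0 y| + |U y|‖ := by
          refine norm_le_norm_of_abs_le_abs ?_
          exact le_trans habs
            (le_of_eq (abs_of_nonneg (add_nonneg (abs_nonneg _) (abs_nonneg _))).symm)
      _ ≤ ‖|S0 y|‖ + ‖|U y|‖ := norm_add_le _ _
      _ = ‖S0 y‖ + ‖U y‖ := by rw [norm_abs_eq_norm, norm_abs_eq_norm]
      _ ≤ ‖S0‖ * ‖y‖ + ‖U‖ * ‖y‖ := add_le_add (S0.le_opNorm y) (U.le_opNorm y)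
      _ = C * ‖y‖ := by ring
  have hposn : ∀ x : E, ‖x⁺‖ ≤ ‖x‖ := by
    intro x
    refine norm_le_norm_of_abs_le_abs ?_
    rw [abs_of_nonneg (posPart_nonneg x)]
    rw [posPart_def]
    exact sup_le (le_abs_self x) (abs_nonneg x)
  have hnegn : ∀ x : E, ‖x⁻‖ ≤ ‖x‖ := by
    intro x
    refine norm_le_norm_of_abs_le_abs ?_
    rw [abs_of_nonneg (negPart_nonneg x)]
    rw [negPart_def]
    exact sup_le (neg_le_abs x) (abs_nonneg x)
  have hCpos : 0 ≤ C := add_nonneg (norm_nonneg _) (norm_nonneg _)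
  have hfn : ∀ x : E, ‖f x‖ ≤ (2 * C) * ‖x‖ := by
    intro x
    calc ‖f x‖ ≤ ‖m x⁺‖ + ‖m x⁻‖ := norm_sub_le _ _
      _ ≤ C * ‖x⁺‖ + C * ‖x⁻‖ :=
          add_le_add (hmn _ (posPart_nonneg x)) (hmn _ (negPart_nonneg x))
      _ ≤ C * ‖x‖ + C * ‖x‖ := add_le_add
          (mul_le_mul_of_nonneg_left (hposn x) hCpos)
          (mul_le_mul_of_nonneg_left (hnegn x) hCpos)
      _ = (2 * C) * ‖x‖ := by ring
  set fhom : E →+ F := AddMonoidHom.mk' f hfadd with hfhom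
  have hcont : Continuous f := by
    have hlip : LipschitzWith (Real.toNNReal (2 * C)) f := by
      refine LipschitzWith.of_dist_le_mul fun x y => ?_
      have hsub : f x - f y = f (x - y) := (map_sub fhom x y).symm
      rw [dist_eq_norm, dist_eq_norm, hsub]
      calc ‖f (x - y)‖ ≤ (2 * C) * ‖x - y‖ := hfn _
        _ = (Real.toNNReal (2 * C) : ℝ) * ‖x - y‖ := by
            rw [Real.coe_toNNReal _ (by linarith)]
    exact hlip.continuous
  set M : E →L[ℝ] F := fhom.toRealLinearMap hcont with hM
  have hMapp : ∀ x : E, M x = f x := fun x => rfl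
  have hMx : ∀ x : E, 0 ≤ x → M x = m x := fun x hx => by rw [hMapp, hfx x hx]
  have hub2 : ∀ S ∈ A, OpLE S M := by
    intro S hS
    refine opLE_of_pt fun x hx => ?_
    rw [hMx x hx]
    exact (hm x hx).1 (hmemD S hS x hx)
  have hleast : ∀ V, IsRegPOp (P : Set (E →L[ℝ] F)) V → (∀ S ∈ A, OpLE S V) → OpLE M V := by
    intro V _ hV
    refine opLE_of_pt fun x hx => ?_
    rw [hMx x hx]
    exact (hm x hx).2 fun w hw => hubD V hV x hx w hw
  have hMreg : IsRegPOp (P : Set (E →L[ℝ] F)) M := by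
    have hW : U - S0 ∈ P := sub_mem (aux_regular_mem hU) (aux_regular_mem (hA S0 hS0))
    have hD1pos : IsPosOp (M - S0) := by
      intro x hx
      simp only [ContinuousLinearMap.sub_apply]
      rw [hMx x hx]
      exact sub_nonneg.2 (hlb x hx)
    have hD1le : OpLE (M - S0) (U - S0) := by
      refine opLE_of_pt fun x hx => ?_
      simp only [ContinuousLinearMap.sub_apply]
      rw [hMx x hx]
      exact sub_le_sub_right (hubm x hx) _
    have hD1lo : OpLE (-(U - S0)) (M - S0) := by
      refine opLE_of_pt fun x hx => ?_
      have h1 := hD1pos x hx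
      have h2 := opLE_iff.1 hD1le x hx
      simp only [ContinuousLinearMap.neg_apply]
      exact le_trans (neg_nonpos.2 (le_trans h1 h2)) h1
    have hD1reg : IsRegPOp (P : Set (E →L[ℝ] F)) (M - S0) :=
      aux_dominated_regular hdom hW hD1lo hD1le
    have : M = (M - S0) + S0 := by abel
    rw [this]
    exact aux_regular_add hD1reg (hA S0 hS0)
  exact ⟨M, hMreg, hub2, hleast⟩

/-- Let `F` be Dedekind complete and `P` a subspace of `L(E,F)` closed in the operator
norm and satisfying the domination property. Then the regularly `P`-operators form a
Dedekind complete Banach lattice under the enveloping norm; moreover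
`‖T‖_{r-P} = ‖|T|‖` for every regularly `P`-operator `T`. -/
theorem regPOp_dedekindComplete_banachLattice (P : Submodule ℝ (E →L[ℝ] F))
    (hP : IsClosed (P : Set (E →L[ℝ] F)))
    (hdom : ∀ S T : E →L[ℝ] F, IsPosOp S → OpLE S T → T ∈ P → S ∈ P)
    (hF : ∀ A : Set F, A.Nonempty → BddAbove A → ∃ s, IsLUB A s) :
    -- Dedekind completeness of the lattice of regularly `P`-operators
    (∀ A : Set (E →L[ℝ] F), (∀ S ∈ A, IsRegPOp (P : Set (E →L[ℝ] F)) S) → A.Nonempty →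
      (∃ U, IsRegPOp (P : Set (E →L[ℝ] F)) U ∧ ∀ S ∈ A, OpLE S U) →
      ∃ M, IsRegPOp (P : Set (E →L[ℝ] F)) M ∧ (∀ S ∈ A, OpLE S M) ∧
        ∀ U, IsRegPOp (P : Set (E →L[ℝ] F)) U → (∀ S ∈ A, OpLE S U) → OpLE M U) ∧
    -- completeness with respect to the enveloping norm
    (∀ T : ℕ → E →L[ℝ] F, (∀ n, IsRegPOp (P : Set (E →L[ℝ] F)) (T n)) →
      (∀ ε : ℝ, 0 < ε → ∃ N : ℕ, ∀ m ≥ N, ∀ n ≥ N,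
        envNorm (P : Set (E →L[ℝ] F)) (T m - T n) < ε) →
      ∃ L : E →L[ℝ] F, IsRegPOp (P : Set (E →L[ℝ] F)) L ∧
        Tendsto (fun n => envNorm (P : Set (E →L[ℝ] F)) (T n - L)) atTop (𝓝 0)) ∧
    -- the enveloping norm is the operator norm of the modulus
    (∀ T M : E →L[ℝ] F, IsRegPOp (P : Set (E →L[ℝ] F)) T → IsModulusOp T M →
      envNorm (P : Set (E →L[ℝ] F)) T = ‖M‖) ∧
    -- the enveloping norm is a lattice norm
    (∀ S T MS MT : E →L[ℝ] F, IsRegPOp (P : Set (E →L[ℝ] F)) S →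
      IsRegPOp (P : Set (E →L[ℝ] F)) T → IsModulusOp S MS → IsModulusOp T MT →
      OpLE MS MT →
      envNorm (P : Set (E →L[ℝ] F)) S ≤ envNorm (P : Set (E →L[ℝ] F)) T) := by
  refine ⟨?_, ?_, ?_, ?_⟩
  · rintro A hA hne ⟨U, hU, hub⟩
    exact aux_sup hdom hF A hA hne U hU hub
  · intro T hreg hC
    exact aux_complete hP hdom T hreg hC
  · intro T M hT hM
    exact aux_envNorm_eq_modulus hdom hT hM
  · intro S T MS MT hS hT hMS hMT hle
    rw [aux_envNorm_eq_modulus hdom hS hMS, aux_envNorm_eq_modulus hdom hT hMT]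
    exact aux_norm_mono (aux_modulus_nonneg hMS) hle
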